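/- arXiv:2106.01605 — 2 statements merged into one kernel-verified Lean document; each statement's English description precedes it below -/
import Mathlib

section
/- With the bilinear form ⟨u,v⟩ = 2(x_u x_v + y_u y_v − t_u t_v) on symmetric 2×2 real matrices v = [[t+y, x],[x, t−y]] (equivalently ⟨v,v⟩ = −2 det v, polarized), the roots α_m defined by α_{a+2m} = γ^m α_a (γ^T)^m satisfy the linear relation α_m + (N−1) α_{m+2} = (N−1) α_{m+1} + α_{m+3} for all m. -/
/-!
Write `Φ X = γ X γᵀ`. Since `α (m + 2) = Φ (α m)`, applying the linear map `Φ` to the relation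
at `m` yields the relation at `m + 2`, and since `det γ = 1` the map `Φ` is injective, so the
relation at `m + 2` also gives back the relation at `m`. Thus the relation holds for all `m` as
soon as it holds for two consecutive values, which is a direct computation with `α 1, …, α 5`.
-/

open Function

theorem Int.forall_of_add_two_iff {P : ℤ → Prop} (h : ∀ m, P (m + 2) ↔ P m) (a : ℤ)
    (ha : P a) (ha' : P (a + 1)) (m : ℤ) : P m := by
  suffices ∀ m, P m ∧ P (m + 1) from (this m).1
  intro m
  induction m using Int.inductionOn' (b := a) with
  | zero => exact ⟨ha, ha'⟩
  | succ k _ ih => exact ⟨ih.2, by rw [add_assoc, one_add_one_eq_two]; exact (h k).2 ih.1⟩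
  | pred k _ ih =>
    rw [sub_add_cancel]
    exact ⟨(h _).1 (by rw [show k - 1 + 2 = k + 1 by ring]; exact ih.2), ih.1⟩

namespace Matrix

theorem transpose_fin_two_of {α : Type*} (a b c d : α) : !![a, b; c, d]ᵀ = !![a, c; b, d] := by
  ext i j
  fin_cases i <;> fin_cases j <;> rfl

variable {n R : Type*} [Fintype n] [DecidableEq n] [CommRing R]

theorem mul_mul_transpose_injective {G : Matrix n n R} (hG : IsUnit G) :
    Injective fun X : Matrix n n R => G * X * Gᵀ := fun _ _ hXY =>
  hG.mul_left_cancel <| ((isUnit_transpose G).2 hG).mul_right_cancel hXY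

theorem four_term_relation_add_two_iff {G : Matrix n n R} (hG : IsUnit G) {α : ℤ → Matrix n n R}
    (hrec : ∀ m, α (m + 2) = G * α m * Gᵀ) (k : R) (m : ℤ) :
    (α (m + 2) + k • α (m + 2 + 2) = k • α (m + 2 + 1) + α (m + 2 + 3)) ↔
      (α m + k • α (m + 2) = k • α (m + 1) + α (m + 3)) := by
  have hshift : ∀ j, α (m + 2 + j) = G * α (m + j) * Gᵀ := fun j => by
    rw [add_right_comm]; exact hrec _
  have hlhs : α (m + 2) + k • α (m + 2 + 2) = G * (α m + k • α (m + 2)) * Gᵀ := by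
    rw [Matrix.mul_add, Matrix.add_mul, Matrix.mul_smul, Matrix.smul_mul, ← hrec, ← hshift]
  have hrhs : k • α (m + 2 + 1) + α (m + 2 + 3) = G * (k • α (m + 1) + α (m + 3)) * Gᵀ := by
    rw [Matrix.mul_add, Matrix.add_mul, Matrix.mul_smul, Matrix.smul_mul, ← hshift, ← hshift]
  rw [hlhs, hrhs]
  exact (mul_mul_transpose_injective hG).eq_iff

end Matrix

theorem stmt4_general (N : ℤ)
    (α : ℤ → Matrix (Fin 2) (Fin 2) ℤ)
    (h1 : α 1 = !![2, 1; 1, 0]) (h2 : α 2 = !![0, -1; -1, 0])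
    (hrec : ∀ m : ℤ,
      α (m + 2) = !![1, -1; N, 1 - N] * α m * (!![1, -1; N, 1 - N]).transpose) :
    ∀ m : ℤ, α m + (N - 1) • α (m + 2) = (N - 1) • α (m + 1) + α (m + 3) := by
  have hγ : IsUnit !![1, -1; N, 1 - N] := by
    simp [Matrix.isUnit_iff_isUnit_det, Matrix.det_fin_two_of]
  have h3 : α 3 = _ := hrec 1
  have h4 : α 4 = _ := hrec 2
  have h5 : α 5 = _ := hrec 3
  have base1 : α 1 + (N - 1) • α 3 = (N - 1) • α 2 + α 4 := by
    rw [h4, h3, h1, h2, Matrix.transpose_fin_two_of]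
    ext i j
    fin_cases i <;> fin_cases j <;> simp <;> ring
  have base2 : α 2 + (N - 1) • α 4 = (N - 1) • α 3 + α 5 := by
    rw [h5, h4, h3, h1, h2, Matrix.transpose_fin_two_of]
    ext i j
    fin_cases i <;> fin_cases j <;> simp <;> ring
  exact Int.forall_of_add_two_iff (Matrix.four_term_relation_add_two_iff hγ hrec (N - 1)) 1
    base1 base2

/-- For the family of roots `α : ℤ → Mat₂(ℤ)` with `α 1 = [[2,1],[1,0]]`,
`α 2 = [[0,−1],[−1,0]]` and `α (m+2) = γ (α m) γᵀ` where `γ = [[1,−1],[N,1−N]]`,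
the linear relation `α m + (N−1) α (m+2) = (N−1) α (m+1) + α (m+3)` holds for all `m`. -/
theorem stmt4 (N : ℤ) (hN : 0 < N)
    (α : ℤ → Matrix (Fin 2) (Fin 2) ℤ)
    (h1 : α 1 = !![2, 1; 1, 0]) (h2 : α 2 = !![0, -1; -1, 0])
    (hrec : ∀ m : ℤ,
      α (m + 2) = !![1, -1; N, 1 - N] * α m * (!![1, -1; N, 1 - N]).transpose) :
    ∀ m : ℤ, α m + (N - 1) • α (m + 2) = (N - 1) • α (m + 1) + α (m + 3) :=
  stmt4_general N α h1 h2 hrec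
end

section
/- Let k ∈ ℤ and Λ̃ = aδ + bα₂ + cα₃ with δ = α₁ + α₂. Setting m = 4Nc + 2 and ℓ = 2c − 2b, the composite reflection satisfies (w₁·w₂)^k(ϱ^{(N)} + Λ̃) − (ϱ^{(N)} + Λ̃) = (mk² + (ℓ+1)k)δ − (km)α₂. -/
/-! The composite `w₁ w₂` is unipotent: it fixes `δ`, moves `α₂` by `-2δ`, and moves every
`β` by an element of the span of `δ` and `α₂`. A linear map `T` with `T v = v + p`,
`T p = p + 2r`, `T r = r` satisfies `T^k v = v + k p + k(k-1) r` for all `k ∈ ℤ`, and for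
`v = ϱ + Λ̃` one reads off `p = (ℓ + 1 + m) δ - m α₂` and `r = m δ`. -/

noncomputable section

/-- The bilinear form `⟨u,v⟩` (polarization of `⟨v,v⟩ = −2 det v`) on symmetric `2×2` real
matrices. -/
def Bform (u v : Matrix (Fin 2) (Fin 2) ℝ) : ℝ :=
  2 * u 0 1 * v 0 1 - u 0 0 * v 1 1 - u 1 1 * v 0 0

def rootA1 : Matrix (Fin 2) (Fin 2) ℝ := !![2, 1; 1, 0]
def rootA2 : Matrix (Fin 2) (Fin 2) ℝ := !![0, -1; -1, 0]
def rootA3 (N : ℕ) : Matrix (Fin 2) (Fin 2) ℝ := !![0, 1; 1, 2*(N:ℝ)]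
def weylRho (N : ℕ) : Matrix (Fin 2) (Fin 2) ℝ := !![1/(N:ℝ), 1/2; 1/2, 1]

/-- The Weyl reflection in the root `α` (of norm 2). -/
def weylRefl (α β : Matrix (Fin 2) (Fin 2) ℝ) : Matrix (Fin 2) (Fin 2) ℝ :=
  β - Bform α β • α

section Unipotent

variable {R M : Type*} [Ring R] [AddCommGroup M] [Module R M] (T : M ≃ₗ[R] M) {v p r : M}

theorem LinearEquiv.apply_add_zsmul_add_zsmul_of_unipotent (hv : T v = v + p)
    (hp : T p = p + 2 • r) (hr : T r = r) (k : ℤ) :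
    T (v + k • p + (k * (k - 1)) • r) = v + (k + 1) • p + ((k + 1) * k) • r := by
  rw [map_add, map_add, map_zsmul, map_zsmul, hv, hp, hr]
  module

theorem LinearEquiv.zpow_apply_of_unipotent (hv : T v = v + p) (hp : T p = p + 2 • r)
    (hr : T r = r) (k : ℤ) : (T ^ k) v = v + k • p + (k * (k - 1)) • r := by
  have step := T.apply_add_zsmul_add_zsmul_of_unipotent hv hp hr
  induction k using Int.induction_on with
  | zero => simp
  | succ n ih =>
    rw [add_comm, zpow_one_add, LinearEquiv.mul_apply, ih, step]
    ring_nf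
  | pred n ih =>
    apply T.injective
    rw [← LinearEquiv.mul_apply, ← zpow_one_add, step]
    convert ih using 3 <;> ring_nf

end Unipotent

theorem weylRefl_rootA1_weylRefl_rootA2_rootDelta :
    weylRefl rootA1 (weylRefl rootA2 (rootA1 + rootA2)) = rootA1 + rootA2 := by
  ext i j
  fin_cases i <;> fin_cases j <;> simp [weylRefl, Bform, rootA1, rootA2]

theorem weylRefl_rootA1_weylRefl_rootA2_rootA2 :
    weylRefl rootA1 (weylRefl rootA2 rootA2) = rootA2 - (2 : ℝ) • (rootA1 + rootA2) := by
  ext i j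
  fin_cases i <;> fin_cases j <;> simp [weylRefl, Bform, rootA1, rootA2] <;> norm_num

theorem weylRefl_rootA1_weylRefl_rootA2_weylRho_add (N : ℕ) (a b c : ℝ) :
    let δ := rootA1 + rootA2
    let v := weylRho N + (a • δ + b • rootA2 + c • rootA3 N)
    weylRefl rootA1 (weylRefl rootA2 v) =
      v + ((2 * c - 2 * b + 1 + (4 * N * c + 2)) • δ - (4 * N * c + 2) • rootA2) := by
  ext i j
  fin_cases i <;> fin_cases j <;> simp [weylRefl, Bform, rootA1, rootA2, rootA3, weylRho] <;> ring

theorem stmt15_general (N : ℕ) (a b c : ℝ) (k : ℤ)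
    (W : Matrix (Fin 2) (Fin 2) ℝ ≃ₗ[ℝ] Matrix (Fin 2) (Fin 2) ℝ)
    (hW : ∀ β, W β = weylRefl rootA1 (weylRefl rootA2 β)) :
    let δ := rootA1 + rootA2
    let Λ := a • δ + b • rootA2 + c • rootA3 N
    let m : ℝ := 4*(N:ℝ)*c + 2
    let ℓ : ℝ := 2*c - 2*b
    (W ^ k) (weylRho N + Λ) - (weylRho N + Λ) =
      (m*(k:ℝ)^2 + (ℓ + 1)*(k:ℝ)) • δ - ((k:ℝ)*m) • rootA2 := by
  intro δ Λ m ℓ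
  have hδ : W δ = δ := by rw [hW, weylRefl_rootA1_weylRefl_rootA2_rootDelta]
  have hα₂ : W rootA2 = rootA2 - (2 : ℝ) • δ := by
    rw [hW, weylRefl_rootA1_weylRefl_rootA2_rootA2]
  have hv : W (weylRho N + Λ) = weylRho N + Λ + ((ℓ + 1 + m) • δ - m • rootA2) := by
    rw [hW, weylRefl_rootA1_weylRefl_rootA2_weylRho_add]
  have hp : W ((ℓ + 1 + m) • δ - m • rootA2) =
      ((ℓ + 1 + m) • δ - m • rootA2) + 2 • m • δ := by
    rw [map_sub, map_smul, map_smul, hδ, hα₂]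
    module
  have hr : W (m • δ) = m • δ := by rw [map_smul, hδ]
  rw [W.zpow_apply_of_unipotent hv hp hr k, ← Int.cast_smul_eq_zsmul ℝ,
    ← Int.cast_smul_eq_zsmul ℝ]
  push_cast
  module

/-- For `Λ̃ = aδ + bα₂ + cα₃`, `m = 4Nc + 2`, `ℓ = 2c − 2b`, and each `k : ℤ`,
`(w₁·w₂)^k (ϱ + Λ̃) − (ϱ + Λ̃) = (mk² + (ℓ+1)k) δ − (km) α₂`. -/
theorem stmt15 (N : ℕ) (hN : 0 < N) (a b c : ℝ) (k : ℤ)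
    (W : Matrix (Fin 2) (Fin 2) ℝ ≃ₗ[ℝ] Matrix (Fin 2) (Fin 2) ℝ)
    (hW : ∀ β, W β = weylRefl rootA1 (weylRefl rootA2 β)) :
    let δ := rootA1 + rootA2
    let Λ := a • δ + b • rootA2 + c • rootA3 N
    let m : ℝ := 4*(N:ℝ)*c + 2
    let ℓ : ℝ := 2*c - 2*b
    (W ^ k) (weylRho N + Λ) - (weylRho N + Λ) =
      (m*(k:ℝ)^2 + (ℓ + 1)*(k:ℝ)) • δ - ((k:ℝ)*m) • rootA2 :=
  stmt15_general N a b c k W hW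
end
end
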